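/- arXiv:2010.08787 — 3 statements merged into one kernel-verified Lean document; each statement's English description precedes it below -/
import Mathlib

section
/- For every n ∈ ℕ and every configuration D_n ∈ C_n: 6c_F n + V_n(D_n) ≥ Δ_strip · #(D_n ∩ ∂L_{FS}) + c_F · #(∂D_n \ S(∂L_{FS})). -/
open scoped BigOperators Classical Topology ENNReal
open Filter MeasureTheory

noncomputable section

/-!
Common setting: film lattice `L_F` with parameter `e_F = 1`, substrate spacing
`e_S = q/p` (`p, q` coprime positive integers), Heitmann–Radin potentials and the
configurational energy `V_n` (with values in `EReal`, since the Heitmann–Radin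
potential takes the value `+∞` below distance `1`).
-/

/-- Points of the plane. -/
abbrev Pt : Type := ℝ × ℝ

/-- The lattice vector `t₁ = (1,0)`. -/
def t1 : Pt := ((1 : ℝ), (0 : ℝ))

/-- The lattice vector `t₂ = (1/2, √3/2)`. -/
def t2 : Pt := ((1 / 2 : ℝ), Real.sqrt 3 / 2)

/-- Euclidean distance on `ℝ × ℝ`. -/
def dE (x y : Pt) : ℝ := Real.sqrt ((x.1 - y.1) ^ 2 + (x.2 - y.2) ^ 2)

/-- Substrate lattice spacing `e_S = q / p`. -/
def eS (p q : ℕ) : ℝ := (q : ℝ) / (p : ℝ)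

/-- The film lattice `L_F = {(0, e_S) + k₁ t₁ + k₂ t₂ : k₁ ∈ ℤ, k₂ ∈ ℕ ∪ {0}}`. -/
def LF (p q : ℕ) : Set Pt :=
  {x | ∃ (k₁ : ℤ) (k₂ : ℕ), x = (((0 : ℝ), eS p q) : Pt) + (k₁ : ℝ) • t1 + (k₂ : ℝ) • t2}

/-- The set `∂L_{FS} = {(k q, e_S) : k ∈ ℤ}` of lower-boundary film sites lying at
distance `e_S` above a substrate atom. -/
def bLFS (p q : ℕ) : Set Pt := {x | ∃ k : ℤ, x = (((k : ℝ) * (q : ℝ), eS p q) : Pt)}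

/-- Crystalline configurations with `n` atoms: subsets of `L_F` of cardinality `n`. -/
def Cn (p q n : ℕ) : Set (Finset Pt) := {D | ↑D ⊆ LF p q ∧ D.card = n}

/-- The Heitmann–Radin sticky-disc potential: `+∞` for `r < 1`, `-c_F` at `r = 1`,
`0` for `r > 1`. -/
def vF (cF : ℝ) (r : ℝ) : EReal :=
  if r < 1 then (⊤ : EReal) else if r = 1 then ((-cF : ℝ) : EReal) else (0 : EReal)

/-- The one-body substrate potential `v¹`: `-c_S` on `∂L_{FS}`, `0` otherwise. -/
def v1 (cS : ℝ) (p q : ℕ) (x : Pt) : ℝ := if x ∈ bLFS p q then -cS else 0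

/-- The total energy `V_n(D) = Σ_{(x,y) ∈ D×D, x ≠ y} v_F(|x-y|) + Σ_{x ∈ D} v¹(x)`. -/
def Vn (cF cS : ℝ) (p q : ℕ) (D : Finset Pt) : EReal :=
  (∑ e ∈ D.offDiag, vF cF (dE e.1 e.2)) + (((∑ x ∈ D, v1 cS p q x) : ℝ) : EReal)

/-- The dewetting condition: `c_S < 4c_F` if `q = 1` and `c_S < 6c_F` if `q ≠ 1`. -/
def Dewetting (cF cS : ℝ) (q : ℕ) : Prop := if q = 1 then cS < 4 * cF else cS < 6 * cF

/-- The boundary `∂D` of a configuration: atoms with fewer than `6` film neighbours. -/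
def bdry (D : Finset Pt) : Finset Pt :=
  D.filter fun x => (D.filter fun y => dE x y = 1).card < 6

/-- The empirical measure `μ_{D_n} = (1/n) Σ_{x ∈ D_n} δ_{x/√n}`. -/
def emp (n : ℕ) (D : Finset Pt) : Measure Pt :=
  ((n : ℝ≥0∞))⁻¹ • ∑ x ∈ D, Measure.dirac (((Real.sqrt n)⁻¹ : ℝ) • x)

/-- A configuration of `n` consecutive sites `{w, w + t₁, …, w + (n-1) t₁}` on `∂L_{FS}`. -/
def IsConsecutive (p q n : ℕ) (Dw : Finset Pt) : Prop :=
  ∃ w : Pt, w ∈ bLFS p q ∧ Dw = (Finset.range n).image fun i => w + (i : ℝ) • t1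

/-- Two atoms joined by a chain of atoms of `D` with consecutive distances `1`. -/
def chainConn (D : Finset Pt) (x y : Pt) : Prop :=
  Relation.ReflTransGen (fun a b => a ∈ D ∧ b ∈ D ∧ dE a b = 1) x y

/-- Connectedness of a configuration. -/
def IsConnectedConf (D : Finset Pt) : Prop := ∀ x ∈ D, ∀ y ∈ D, chainConn D x y

/-- `C` is a connected component of `D` (the set of atoms of `D` chain-connected to
some atom of `D`). -/
def IsComponent (D C : Finset Pt) : Prop :=
  ∃ x ∈ D, ∀ y : Pt, y ∈ C ↔ y ∈ D ∧ chainConn D x y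

/-- Almost-connectedness: connected if `q = 1`; if `q ≠ 1`, the connected components
can be enumerated so that each one is at distance at most `q` from the union of the
previous ones. -/
def AlmostConnected (q : ℕ) (D : Finset Pt) : Prop :=
  if q = 1 then IsConnectedConf D
  else
    ∃ (k : ℕ) (f : Fin k → Finset Pt),
      Function.Injective f ∧
      (∀ i, IsComponent D (f i)) ∧
      (∀ C : Finset Pt, IsComponent D C → ∃ i, C = f i) ∧
      (∀ i : Fin k, 1 ≤ (i : ℕ) →
        ∃ x ∈ f i, ∃ j : Fin k, j < i ∧ ∃ y ∈ f j, dE x y ≤ (q : ℝ))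

/-- Local energy `E_loc(x)` of a site with respect to the configuration `D`. -/
def Eloc (cF : ℝ) (D : Finset Pt) (x : Pt) : ℝ :=
  if x ∈ D then cF * (6 - ((D.filter fun y => dE x y = 1).card : ℝ)) else 0

/-- Height `y_M` of the topmost atom of `D` in the column of `x`. -/
def yM (D : Finset Pt) (x : Pt) : ℝ := sSup {y : ℝ | ((x.1, y) : Pt) ∈ D}

/-- The strip top `x̃ = (x¹, y_M)`. -/
def til (D : Finset Pt) (x : Pt) : Pt := (x.1, yM D x)

/-- The weight `w₊(x̃)`. -/
def wPlus (p q : ℕ) (D : Finset Pt) (x : Pt) : ℝ :=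
  if x + t1 ∈ D ∧ x + t1 ∈ bLFS p q ∧ til D x + t2 = til D (x + t1) + t2 - t1 then 1 / 2 else 1

/-- The weight `w₋(x̃)`. -/
def wMinus (p q : ℕ) (D : Finset Pt) (x : Pt) : ℝ :=
  if x - t1 ∈ D ∧ x - t1 ∈ bLFS p q ∧ til D x + t2 - t1 = til D (x - t1) + t2 then 1 / 2 else 1

/-- Lower strip energy `E_strip,below(x)`. -/
def EStripBelow (cF cS : ℝ) (p q : ℕ) (D : Finset Pt) (x : Pt) : ℝ :=
  if q = 1 then
    (1 / 2) * Eloc cF D x + (1 / 4) * Eloc cF D (x + t1) + (1 / 4) * Eloc cF D (x - t1) - cS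
  else
    Eloc cF D x + (1 / 2) * Eloc cF D (x + t1) + (1 / 2) * Eloc cF D (x - t1) - cS

/-- Upper strip energy `E_strip,above(x)`. -/
def EStripAbove (cF : ℝ) (p q : ℕ) (D : Finset Pt) (x : Pt) : ℝ :=
  (if til D x ≠ x then Eloc cF D (til D x) else 0) +
    wPlus p q D x * Eloc cF D (til D x + t2) +
    wMinus p q D x * Eloc cF D (til D x + t2 - t1)

/-- The strip energy `E_strip(x) = E_strip,below(x) + E_strip,above(x)`. -/
def EStrip (cF cS : ℝ) (p q : ℕ) (D : Finset Pt) (x : Pt) : ℝ :=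
  EStripBelow cF cS p q D x + EStripAbove cF p q D x

/-- `Δ_strip`: `4c_F - c_S` if `q = 1`, `6c_F - c_S` if `q ≠ 1`. -/
def DeltaStrip (cF cS : ℝ) (q : ℕ) : ℝ := if q = 1 then 4 * cF - cS else 6 * cF - cS

/-- The union `S(∂L_{FS})` of all strips of the configuration `D`. -/
def SLFS (p q : ℕ) (D : Finset Pt) : Finset Pt :=
  D.filter fun y => ∃ x, x ∈ D ∧ x ∈ bLFS p q ∧
    (y = x ∨ y = x + t1 ∨ y = x - t1 ∨ y = til D x ∨ y = til D x + t2 ∨ y = til D x + t2 - t1)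

/-- The rescaled energy `E_n(μ_{D_n}) = n^{-1/2} (V_n(D_n) + 6 c_F n)`. -/
def En (cF cS : ℝ) (p q n : ℕ) (D : Finset Pt) : EReal :=
  ((((Real.sqrt n)⁻¹ : ℝ)) : EReal) * (Vn cF cS p q D + ((6 * cF * (n : ℝ) : ℝ) : EReal))

/-!
Every site of the film lattice has exactly six lattice neighbours, so `6 c_F n + V_n(D)` is
`c_F` times the number of vacant neighbour directions of atoms of `D`, minus
`c_S #(D ∩ ∂L_{FS})`. An atom of `∂D` has at least one vacant direction, so it suffices to
find, for each substrate-bound atom `x`, four (if `q = 1`) or six (otherwise) vacant directions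
at atoms of its strip, all distinct. The two downward directions at the bottom row are always
vacant; in direction `±t₁` there is either a vacancy at `x` or an atom `x ± t₁` of the bottom
row with one more vacant downward direction; likewise at the top `x̃` of the column of `x`, since
`x̃ + (0, √3)` is vacant. Two substrate-bound atoms are a multiple of `q` apart horizontally,
which keeps these vacancies distinct; for the sideways ones this needs `q ≠ 1`.
-/

open Finset

def hexDir : Fin 6 → Pt := ![t1, t2, t2 - t1, -t1, -t2, t1 - t2]

lemma sqrt_three_sq : Real.sqrt 3 ^ 2 = 3 := Real.sq_sqrt (by norm_num)

lemma hexDir_injective : Function.Injective hexDir := by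
  have h : 0 < Real.sqrt 3 := by positivity
  intro i j hij
  fin_cases i <;> fin_cases j <;> simp [hexDir, t1, t2, Prod.ext_iff] at hij ⊢ <;>
    norm_num at hij <;> linarith

lemma dE_sq_of_sub_eq (x y : Pt) (a b : ℝ) (h : y - x = a • t1 + b • t2) :
    dE x y ^ 2 = a ^ 2 + a * b + b ^ 2 := by
  have h1 := congrArg Prod.fst h
  have h2 := congrArg Prod.snd h
  simp only [t1, t2, Prod.fst_sub, Prod.snd_sub, Prod.fst_add, Prod.snd_add, Prod.smul_fst,
    Prod.smul_snd, smul_eq_mul] at h1 h2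
  rw [dE, Real.sq_sqrt (by positivity), ← neg_sub y.1, ← neg_sub y.2, h1, h2]
  nlinarith [sqrt_three_sq]

lemma dE_add_hexDir (x : Pt) (i : Fin 6) : dE x (x + hexDir i) = 1 := by
  rw [dE, ← Real.sqrt_one]
  congr 1
  fin_cases i <;> simp [hexDir, t1, t2] <;> nlinarith [sqrt_three_sq]

lemma LF_sub {p q : ℕ} {x y : Pt} (hx : x ∈ LF p q) (hy : y ∈ LF p q) :
    ∃ a b : ℤ, y - x = (a : ℝ) • t1 + (b : ℝ) • t2 := by
  obtain ⟨a, b, rfl⟩ := hx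
  obtain ⟨a', b', rfl⟩ := hy
  refine ⟨a' - a, (b' : ℤ) - b, ?_⟩
  push_cast
  module

lemma eS_le_snd_of_mem_LF {p q : ℕ} {x : Pt} (hx : x ∈ LF p q) : eS p q ≤ x.2 := by
  obtain ⟨a, b, rfl⟩ := hx
  simp only [t1, t2, Prod.snd_add, Prod.smul_snd, smul_eq_mul]
  have : 0 ≤ (b : ℝ) * (Real.sqrt 3 / 2) := by positivity
  linarith

lemma int_sq_add_mul_add_sq_eq_one {a b : ℤ} (h : a ^ 2 + a * b + b ^ 2 = 1) :
    (a = 1 ∧ b = 0) ∨ (a = 0 ∧ b = 1) ∨ (a = -1 ∧ b = 1) ∨ (a = -1 ∧ b = 0) ∨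
      (a = 0 ∧ b = -1) ∨ (a = 1 ∧ b = -1) := by
  have ha : a ^ 2 ≤ 1 := by nlinarith [sq_nonneg (a + 2 * b)]
  have hb : b ^ 2 ≤ 1 := by nlinarith [sq_nonneg (2 * a + b)]
  have ha' : |a| ≤ 1 := by nlinarith [sq_abs a, abs_nonneg a]
  have hb' : |b| ≤ 1 := by nlinarith [sq_abs b, abs_nonneg b]
  obtain ⟨ha1, ha2⟩ := abs_le.mp ha'
  obtain ⟨hb1, hb2⟩ := abs_le.mp hb'
  interval_cases a <;> interval_cases b <;> omega

lemma one_le_int_sq_add_mul_add_sq {a b : ℤ} (h : a ≠ 0 ∨ b ≠ 0) :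
    1 ≤ a ^ 2 + a * b + b ^ 2 := by
  have : 0 < a ^ 2 + a * b + b ^ 2 := by
    rcases h with h | h
    · nlinarith [sq_pos_of_ne_zero h, sq_nonneg (a + 2 * b)]
    · nlinarith [sq_pos_of_ne_zero h, sq_nonneg (2 * a + b)]
  omega

lemma one_le_dE_of_mem_LF {p q : ℕ} {x y : Pt} (hx : x ∈ LF p q) (hy : y ∈ LF p q)
    (hxy : x ≠ y) : 1 ≤ dE x y := by
  obtain ⟨a, b, hab⟩ := LF_sub hx hy
  have hne : a ≠ 0 ∨ b ≠ 0 := by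
    by_contra! h
    apply hxy
    rw [← sub_eq_zero, ← neg_sub, hab, h.1, h.2]
    simp
  have h1 : (1 : ℝ) ≤ dE x y ^ 2 := by
    rw [dE_sq_of_sub_eq x y a b hab]
    exact_mod_cast one_le_int_sq_add_mul_add_sq hne
  have h0 : 0 ≤ dE x y := Real.sqrt_nonneg _
  nlinarith

lemma exists_hexDir_of_dE_eq_one {p q : ℕ} {x y : Pt} (hx : x ∈ LF p q) (hy : y ∈ LF p q)
    (h : dE x y = 1) : ∃ i, y = x + hexDir i := by
  obtain ⟨a, b, hab⟩ := LF_sub hx hy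
  have hsq := dE_sq_of_sub_eq x y a b hab
  rw [h] at hsq
  have h1 : a ^ 2 + a * b + b ^ 2 = 1 := by exact_mod_cast hsq.symm
  rw [sub_eq_iff_eq_add'] at hab
  rcases int_sq_add_mul_add_sq_eq_one h1 with
    ⟨rfl, rfl⟩ | ⟨rfl, rfl⟩ | ⟨rfl, rfl⟩ | ⟨rfl, rfl⟩ | ⟨rfl, rfl⟩ | ⟨rfl, rfl⟩
  · exact ⟨0, by simp [hab, hexDir]⟩
  · exact ⟨1, by simp [hab, hexDir]⟩
  · exact ⟨2, by simp [hab, hexDir]; abel⟩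
  · exact ⟨3, by simp [hab, hexDir]⟩
  · exact ⟨4, by simp [hab, hexDir]⟩
  · exact ⟨5, by simp [hab, hexDir]; abel⟩

lemma EReal.coe_finset_sum {α : Type*} (s : Finset α) (f : α → ℝ) :
    ((∑ a ∈ s, f a : ℝ) : EReal) = ∑ a ∈ s, (f a : EReal) :=
  map_sum (⟨⟨((↑) : ℝ → EReal), EReal.coe_zero⟩, EReal.coe_add⟩ : ℝ →+ EReal) f s

lemma card_neighbors_eq_card_hexDir {p q : ℕ} {D : Finset Pt} (hD : ↑D ⊆ LF p q) {x : Pt}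
    (hx : x ∈ LF p q) :
    #(D.filter fun y => dE x y = 1) = #{i : Fin 6 | x + hexDir i ∈ D} := by
  rw [← card_image_of_injective _ ((add_right_injective x).comp hexDir_injective)]
  congr 1
  ext y
  simp only [mem_filter, mem_image, mem_univ, true_and, Function.comp_apply]
  constructor
  · rintro ⟨hy, h⟩
    obtain ⟨i, rfl⟩ := exists_hexDir_of_dE_eq_one hx (hD hy) h
    exact ⟨i, hy, rfl⟩
  · rintro ⟨i, hi, rfl⟩
    exact ⟨hi, dE_add_hexDir x i⟩

lemma sum_offDiag_vF {p q : ℕ} {D : Finset Pt} (hD : ↑D ⊆ LF p q) (cF : ℝ) :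
    ∑ e ∈ D.offDiag, vF cF (dE e.1 e.2) =
      ((-cF * ∑ x ∈ D, (#(D.filter fun y => dE x y = 1) : ℝ) : ℝ) : EReal) := by
  have hvF : ∀ e ∈ D.offDiag, vF cF (dE e.1 e.2) =
      ((if dE e.1 e.2 = 1 then -cF else 0 : ℝ) : EReal) := by
    intro e he
    obtain ⟨h1, h2, hne⟩ := mem_offDiag.mp he
    rw [vF, if_neg (one_le_dE_of_mem_LF (hD h1) (hD h2) hne).not_gt]
    split_ifs <;> simp
  have hdiag : ∀ e ∈ D ×ˢ D, e ∉ D.offDiag → (if dE e.1 e.2 = 1 then -cF else 0) = 0 := by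
    rintro ⟨x, y⟩ hxy hoff
    obtain ⟨hx, hy⟩ := mem_product.mp hxy
    obtain rfl : x = y := by simpa [mem_offDiag, hx, hy] using hoff
    simp [dE]
  have hsub : D.offDiag ⊆ D ×ˢ D := fun e he =>
    mem_product.mpr ⟨(mem_offDiag.mp he).1, (mem_offDiag.mp he).2.1⟩
  rw [sum_congr rfl hvF, ← EReal.coe_finset_sum, sum_subset hsub hdiag, sum_product, mul_sum]
  congr 2 with x
  rw [← sum_filter, sum_const, nsmul_eq_mul, mul_comm]

lemma sum_v1 (cS : ℝ) (p q : ℕ) (D : Finset Pt) :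
    ∑ x ∈ D, v1 cS p q x = -cS * #(D.filter fun x => x ∈ bLFS p q) := by
  simp only [v1]
  rw [← sum_filter, sum_const, nsmul_eq_mul, mul_comm]

def vacancies (D : Finset Pt) (x : Pt) : ℕ := #{i : Fin 6 | x + hexDir i ∉ D}

lemma card_neighbors_add_vacancies {p q : ℕ} {D : Finset Pt} (hD : ↑D ⊆ LF p q) {x : Pt}
    (hx : x ∈ LF p q) : #(D.filter fun y => dE x y = 1) + vacancies D x = 6 := by
  rw [card_neighbors_eq_card_hexDir hD hx, vacancies, card_filter_add_card_filter_not]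
  rfl

lemma six_mul_add_Vn {p q : ℕ} {D : Finset Pt} (hD : ↑D ⊆ LF p q) (cF cS : ℝ) :
    ((6 * cF * #D : ℝ) : EReal) + Vn cF cS p q D =
      ((cF * ∑ x ∈ D, (vacancies D x : ℝ) - cS * #(D.filter fun x => x ∈ bLFS p q) : ℝ) :
        EReal) := by
  have hvac : ∀ x ∈ D, (vacancies D x : ℝ) = 6 - #(D.filter fun y => dE x y = 1) := by
    intro x hx
    rw [eq_sub_iff_add_eq, add_comm]
    exact_mod_cast card_neighbors_add_vacancies hD (hD hx)
  rw [Vn, sum_offDiag_vF hD, sum_v1, ← EReal.coe_add, ← EReal.coe_add, sum_congr rfl hvac,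
    sum_sub_distrib, sum_const, nsmul_eq_mul]
  ring_nf

lemma card_filter_add_card_filter_le {α β : Type*} [DecidableEq β] {B : Finset α}
    {T : Finset β} {P Q : α → Prop} [DecidablePred P] [DecidablePred Q] {f g : α → β}
    (hf : Set.InjOn f B) (hg : Set.InjOn g B) (hfg : ∀ x ∈ B, ∀ y ∈ B, f x ≠ g y)
    (hfT : ∀ x ∈ B, P x → f x ∈ T) (hgT : ∀ x ∈ B, Q x → g x ∈ T) :
    #(B.filter P) + #(B.filter Q) ≤ #T := by
  have hdisj : Disjoint ((B.filter P).image f) ((B.filter Q).image g) := by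
    simp only [disjoint_left, mem_image, mem_filter, not_exists, not_and]
    rintro _ ⟨x, ⟨hx, -⟩, rfl⟩ y ⟨hy, -⟩
    exact (hfg x hx y hy).symm
  rw [← card_image_of_injOn (hf.mono (filter_subset _ _)),
    ← card_image_of_injOn (hg.mono (filter_subset _ _)), ← card_union_of_disjoint hdisj]
  apply card_le_card
  simp only [union_subset_iff, image_subset_iff, mem_filter]
  exact ⟨fun x hx => hfT x hx.1 hx.2, fun x hx => hgT x hx.1 hx.2⟩

def exposed (D S : Finset Pt) (d : Pt) : Finset Pt := S.filter fun y => y + d ∉ D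

section Strip

variable {p q : ℕ} {D : Finset Pt}

lemma snd_of_mem_bLFS {x : Pt} (hx : x ∈ bLFS p q) : x.2 = eS p q := by
  obtain ⟨k, rfl⟩ := hx
  rfl

lemma fst_add_ne_of_mem_bLFS {x y : Pt} (hx : x ∈ bLFS p q) (hy : y ∈ bLFS p q) {c : ℝ}
    (hc : c ≠ 0) (hcq : |c| < q) : x.1 + c ≠ y.1 := by
  obtain ⟨k, rfl⟩ := hx
  obtain ⟨l, rfl⟩ := hy
  intro h
  have hq : (0 : ℝ) < q := (abs_nonneg c).trans_lt hcq
  have hc' : c = ((l - k : ℤ) : ℝ) * q := by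
    push_cast
    simp only at h
    linarith
  rw [hc', abs_mul, Nat.abs_cast, mul_lt_iff_lt_one_left hq, ← Int.cast_abs,
    ← Int.cast_one, Int.cast_lt, Int.abs_lt_one_iff] at hcq
  simp [hc', hcq] at hc

lemma injOn_bLFS_of_fst_eq_add {f : Pt → Pt} {c : ℝ} (hf : ∀ x, (f x).1 = x.1 + c) :
    Set.InjOn f (bLFS p q) := by
  intro x hx y hy hxy
  have h1 : x.1 = y.1 := by simpa [hf] using congrArg Prod.fst hxy
  exact Prod.ext h1 ((snd_of_mem_bLFS hx).trans (snd_of_mem_bLFS hy).symm)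

lemma notMem_of_snd_lt_eS (hD : ↑D ⊆ LF p q) {w : Pt} (hw : w.2 < eS p q) : w ∉ D :=
  fun h => (eS_le_snd_of_mem_LF (hD h)).not_gt hw

lemma finite_column (D : Finset Pt) (a : ℝ) : {y : ℝ | ((a, y) : Pt) ∈ D}.Finite :=
  D.finite_toSet.preimage fun _ _ _ _ h => congrArg Prod.snd h

lemma til_mem {x : Pt} (hx : x ∈ D) : til D x ∈ D :=
  Set.Nonempty.csSup_mem ⟨x.2, by simpa using hx⟩ (finite_column D x.1)

lemma notMem_of_yM_lt {x w : Pt} (hw₁ : w.1 = x.1) (hw₂ : yM D x < w.2) : w ∉ D := by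
  intro h
  have : w.2 ≤ yM D x := le_csSup (finite_column D x.1).bddAbove (by simpa [← hw₁] using h)
  exact this.not_gt hw₂

lemma mem_SLFS {x y : Pt} (hx : x ∈ D) (hxb : x ∈ bLFS p q) (hy : y ∈ D)
    (h : y = x ∨ y = x + t1 ∨ y = x - t1 ∨ y = til D x ∨ y = til D x + t2 ∨
      y = til D x + t2 - t1) : y ∈ SLFS p q D :=
  mem_filter.mpr ⟨hy, x, hx, hxb, h⟩

lemma filter_bLFS_subset_SLFS : D.filter (fun x => x ∈ bLFS p q) ⊆ SLFS p q D := fun x hx =>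
  mem_SLFS (mem_filter.mp hx).1 (mem_filter.mp hx).2 (mem_filter.mp hx).1 (Or.inl rfl)

lemma filter_bLFS_subset_exposed (hD : ↑D ⊆ LF p q) {d : Pt} (hd : d.2 < 0) :
    D.filter (fun x => x ∈ bLFS p q) ⊆ exposed D (SLFS p q D) d := by
  intro x hx
  refine mem_filter.mpr ⟨filter_bLFS_subset_SLFS hx, notMem_of_snd_lt_eS hD ?_⟩
  rw [Prod.snd_add, snd_of_mem_bLFS (mem_filter.mp hx).2]
  linarith

lemma two_mul_card_filter_bLFS_le_side (hD : ↑D ⊆ LF p q) (hq : 1 < q) {s d : Pt}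
    (hs : s = t1 ∨ s = -t1) (hd : d.2 < 0) :
    2 * #(D.filter fun x => x ∈ bLFS p q) ≤
      #(exposed D (SLFS p q D) d) + #(exposed D (SLFS p q D) s) := by
  set B := D.filter fun x => x ∈ bLFS p q
  have hs₁ : s.1 ≠ 0 ∧ |s.1| < q := by
    have : (1 : ℝ) < q := by exact_mod_cast hq
    rcases hs with rfl | rfl <;> simpa [t1]
  have hs₂ : s.2 = 0 := by rcases hs with rfl | rfl <;> simp [t1]
  have hpair : #(B.filter fun _ => True) + #(B.filter fun x => x + s ∈ D) ≤
      #(exposed D (SLFS p q D) d) := by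
    refine card_filter_add_card_filter_le (f := id) (g := (· + s)) (Set.injOn_id _)
      (add_left_injective s).injOn ?_ (fun x hx _ => filter_bLFS_subset_exposed hD hd hx) ?_
    · intro x hx y hy h
      exact fst_add_ne_of_mem_bLFS (mem_filter.mp hy).2 (mem_filter.mp hx).2 hs₁.1 hs₁.2
        (congrArg Prod.fst h).symm
    · intro x hx hxs
      obtain ⟨hxD, hxb⟩ := mem_filter.mp hx
      refine mem_filter.mpr ⟨mem_SLFS hxD hxb hxs ?_, notMem_of_snd_lt_eS hD ?_⟩
      · rcases hs with rfl | rfl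
        · exact Or.inr (Or.inl rfl)
        · exact Or.inr (Or.inr (Or.inl (sub_eq_add_neg x t1).symm))
      · rw [Prod.snd_add, Prod.snd_add, snd_of_mem_bLFS hxb, hs₂]
        linarith
  have hvacant : #(B.filter fun x => x + s ∉ D) ≤ #(exposed D (SLFS p q D) s) := by
    refine card_le_card fun x hx => ?_
    obtain ⟨hxB, hxs⟩ := mem_filter.mp hx
    exact mem_filter.mpr ⟨filter_bLFS_subset_SLFS hxB, hxs⟩
  have hsplit := card_filter_add_card_filter_not (s := B) (p := fun x => x + s ∈ D)
  rw [filter_true] at hpair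
  omega

lemma card_filter_add_card_filter_le_top (hq : 0 < q) {u v : Pt} (hu : u = t2 ∨ u = t2 - t1)
    (huv : u + v = (0, Real.sqrt 3)) :
    #((D.filter fun x => x ∈ bLFS p q).filter fun x => til D x + u ∈ D) +
        #((D.filter fun x => x ∈ bLFS p q).filter fun x => til D x + v ∉ D) ≤
      #(exposed D (SLFS p q D) v) := by
  have hB : ↑(D.filter fun x => x ∈ bLFS p q) ⊆ bLFS p q := fun x hx => (mem_filter.mp hx).2
  have hu₁ : u.1 ≠ 0 ∧ |u.1| < q := by
    have : (1 : ℝ) ≤ q := by exact_mod_cast hq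
    rcases hu with rfl | rfl <;> norm_num [t1, t2, abs_of_pos, abs_of_neg] <;> linarith
  refine card_filter_add_card_filter_le (f := (til D · + u)) (g := til D)
    ((injOn_bLFS_of_fst_eq_add (c := u.1) fun _ => rfl).mono hB)
    ((injOn_bLFS_of_fst_eq_add (f := til D) (c := 0) fun _ => (add_zero _).symm).mono hB)
    ?_ ?_ ?_
  · intro x hx y hy
    exact fun h => fst_add_ne_of_mem_bLFS (mem_filter.mp hx).2 (mem_filter.mp hy).2 hu₁.1 hu₁.2
      (congrArg Prod.fst h)
  · intro x hx hxu
    obtain ⟨hxD, hxb⟩ := mem_filter.mp hx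
    refine mem_filter.mpr ⟨mem_SLFS hxD hxb hxu ?_, notMem_of_yM_lt (x := x) ?_ ?_⟩
    · rcases hu with rfl | rfl
      · exact Or.inr (Or.inr (Or.inr (Or.inr (Or.inl rfl))))
      · exact Or.inr (Or.inr (Or.inr (Or.inr (Or.inr (add_sub_assoc _ _ _).symm))))
    · simp [add_assoc, huv, til]
    · simp only [add_assoc, huv, Prod.snd_add, til]
      linarith [Real.sqrt_pos.mpr (show (0 : ℝ) < 3 by norm_num)]
  · intro x hx hxv
    obtain ⟨hxD, hxb⟩ := mem_filter.mp hx
    refine mem_filter.mpr ⟨mem_SLFS hxD hxb (til_mem hxD) ?_, hxv⟩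
    exact Or.inr (Or.inr (Or.inr (Or.inl rfl)))

lemma two_mul_card_filter_bLFS_le_top (hq : 0 < q) :
    2 * #(D.filter fun x => x ∈ bLFS p q) ≤
      #(exposed D (SLFS p q D) t2) + #(exposed D (SLFS p q D) (t2 - t1)) := by
  have hsum : t2 + (t2 - t1) = (0, Real.sqrt 3) := by
    ext <;> norm_num [t1, t2]
  have h₁ := card_filter_add_card_filter_le_top (p := p) (D := D) hq (Or.inl rfl) hsum
  have h₂ := card_filter_add_card_filter_le_top (p := p) (D := D) hq (Or.inr rfl)
    ((add_comm _ _).trans hsum)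
  have h₃ := card_filter_add_card_filter_not (s := D.filter fun x => x ∈ bLFS p q)
    (p := fun x => til D x + t2 ∈ D)
  have h₄ := card_filter_add_card_filter_not (s := D.filter fun x => x ∈ bLFS p q)
    (p := fun x => til D x + (t2 - t1) ∈ D)
  omega

end Strip

lemma sum_vacancies_eq_sum_exposed (D S : Finset Pt) :
    ∑ y ∈ S, vacancies D y = ∑ i, #(exposed D S (hexDir i)) := by
  simp only [vacancies, exposed, card_filter]
  exact sum_comm

lemma mul_card_filter_bLFS_le_sum_vacancies {p q : ℕ} {D : Finset Pt} (hD : ↑D ⊆ LF p q)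
    (hq : 0 < q) :
    (if q = 1 then 4 else 6) * #(D.filter fun x => x ∈ bLFS p q) ≤
      ∑ y ∈ SLFS p q D, vacancies D y := by
  have hdown : ∀ d : Pt, d = -t2 ∨ d = t1 - t2 → d.2 < 0 := by
    rintro d (rfl | rfl) <;> simp [t1, t2]
  have htop := two_mul_card_filter_bLFS_le_top (p := p) (D := D) hq
  rw [sum_vacancies_eq_sum_exposed, Fin.sum_univ_six]
  simp only [hexDir, Fin.isValue, Matrix.cons_val]
  split_ifs with hq₁
  · have hleft := card_le_card (filter_bLFS_subset_exposed hD (hdown _ (Or.inl rfl)))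
    have hright := card_le_card (filter_bLFS_subset_exposed hD (hdown _ (Or.inr rfl)))
    omega
  · have hq' : 1 < q := by omega
    have hleft := two_mul_card_filter_bLFS_le_side hD hq' (Or.inr rfl) (hdown _ (Or.inl rfl))
    have hright := two_mul_card_filter_bLFS_le_side hD hq' (Or.inl rfl) (hdown _ (Or.inr rfl))
    omega

lemma strip_add_card_bdry_sdiff_le_sum_vacancies {p q : ℕ} {D : Finset Pt}
    (hD : ↑D ⊆ LF p q) (hq : 0 < q) :
    (if q = 1 then 4 else 6) * #(D.filter fun x => x ∈ bLFS p q) + #(bdry D \ SLFS p q D) ≤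
      ∑ x ∈ D, vacancies D x := by
  have hvac : ∀ x ∈ bdry D \ SLFS p q D, 1 ≤ vacancies D x := by
    intro x hx
    obtain ⟨hxD, hdeg⟩ := mem_filter.mp (mem_sdiff.mp hx).1
    have := card_neighbors_add_vacancies hD (hD hxD)
    omega
  have hS : SLFS p q D ⊆ D := filter_subset _ _
  have hsdiff : bdry D \ SLFS p q D ⊆ D \ SLFS p q D :=
    sdiff_subset_sdiff (filter_subset _ _) subset_rfl
  calc (if q = 1 then 4 else 6) * #(D.filter fun x => x ∈ bLFS p q) + #(bdry D \ SLFS p q D)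
      ≤ ∑ x ∈ SLFS p q D, vacancies D x + ∑ x ∈ D \ SLFS p q D, vacancies D x := by
        gcongr
        · exact mul_card_filter_bLFS_le_sum_vacancies hD hq
        · exact (card_eq_sum_ones _).trans_le ((sum_le_sum hvac).trans
            (sum_le_sum_of_subset hsdiff))
    _ = ∑ x ∈ D, vacancies D x := by
        rw [add_comm, sum_sdiff hS]

lemma DeltaStrip_eq (cF cS : ℝ) (q : ℕ) :
    DeltaStrip cF cS q = cF * ((if q = 1 then 4 else 6 : ℕ) : ℝ) - cS := by
  unfold DeltaStrip
  split_ifs <;> push_cast <;> ring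

theorem strip_count_lower_bound_general
    (cF cS : ℝ) (hcF : 0 < cF)
    (p q : ℕ) (hq : 0 < q)
    (n : ℕ) (D : Finset Pt) (hD : D ∈ Cn p q n) :
    (((DeltaStrip cF cS q * (((D.filter fun x => x ∈ bLFS p q).card : ℕ) : ℝ) +
        cF * (((bdry D \ SLFS p q D).card : ℕ) : ℝ)) : ℝ) : EReal) ≤
      ((6 * cF * (n : ℝ) : ℝ) : EReal) + Vn cF cS p q D := by
  obtain ⟨hsub, rfl⟩ := hD
  rw [six_mul_add_Vn hsub, EReal.coe_le_coe_iff, DeltaStrip_eq]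
  set k : ℕ := if q = 1 then 4 else 6
  have hcount : ((k * #(D.filter fun x => x ∈ bLFS p q) + #(bdry D \ SLFS p q D) : ℕ) : ℝ) ≤
      ∑ x ∈ D, (vacancies D x : ℝ) := by
    exact_mod_cast strip_add_card_bdry_sdiff_le_sum_vacancies hsub hq
  push_cast at hcount
  linarith [mul_le_mul_of_nonneg_left hcount hcF.le]

/-- `6 c_F n + V_n(D_n) ≥ Δ_strip #(D_n ∩ ∂L_{FS}) + c_F #(∂D_n \ S(∂L_{FS}))`. -/
theorem strip_count_lower_bound
    (cF cS : ℝ) (hcF : 0 < cF) (hcS : 0 < cS)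
    (p q : ℕ) (hp : 0 < p) (hq : 0 < q) (hpq : Nat.Coprime p q)
    (n : ℕ) (D : Finset Pt) (hD : D ∈ Cn p q n) :
    (((DeltaStrip cF cS q * (((D.filter fun x => x ∈ bLFS p q).card : ℕ) : ℝ) +
        cF * (((bdry D \ SLFS p q D).card : ℕ) : ℝ)) : ℝ) : EReal) ≤
      ((6 * cF * (n : ℝ) : ℝ) : EReal) + Vn cF cS p q D :=
  strip_count_lower_bound_general cF cS hcF p q hq n D hD
end
end

section
/- Assume the dewetting condition, and for each n ∈ ℕ let D_n ∈ C_n be a configuration. Then the following are equivalent: (i) there exists a constant C > 0 such that #∂D_n ≤ C √n for every n ∈ ℕ; (ii) there exists a constant C' > 0 such that E_n(μ_{D_n}) ≤ C' for every n ∈ ℕ. -/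
open scoped BigOperators Classical Topology ENNReal
open Filter MeasureTheory

noncomputable section

/-!
Let `M(D) = ∑_{x ∈ D} (6 - #neighbours of x)` count the missing bonds. On the lattice,
`V_n(D) + 6 c_F n = c_F M(D) - c_S #(D ∩ ∂L_FS)` and `#∂D ≤ M(D) ≤ 6 #∂D`. The atoms lacking a
neighbour in direction `v` are as many as those lacking one in direction `-v`, and bottom-row
atoms lack both lower neighbours, so `M(D) ≥ 4 #(bottom row)`; when `q ≠ 1` no two horizontally
adjacent sites are both substrate sites, which improves this to `M(D) ≥ 6 #(D ∩ ∂L_FS)`. With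
`λ = 4` for `q = 1` and `λ = 6` otherwise, dewetting says `c_S < λ c_F`, so the substrate term is
at most a fixed fraction `c_S / (λ c_F) < 1` of `c_F M(D)`, and `√n E_n` and `#∂D` are both
comparable to `M(D)`.
-/

namespace FilmLattice

open Finset

def unitDirs : Finset Pt := {t1, -t1, t2, -t2, t2 - t1, t1 - t2}

lemma sum_unitDirs {M : Type*} [AddCommMonoid M] (f : Pt → M) :
    ∑ v ∈ unitDirs, f v = f t1 + f (-t1) + f t2 + f (-t2) + f (t2 - t1) + f (t1 - t2) := by
  have h3 : Real.sqrt 3 / 2 ≠ 0 := by positivity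
  have h3' : -(Real.sqrt 3 / 2) ≠ Real.sqrt 3 / 2 := by intro h; apply h3; linarith
  rw [unitDirs, sum_insert, sum_insert, sum_insert, sum_insert, sum_insert, sum_singleton]
  · abel
  all_goals norm_num [t1, t2, Prod.ext_iff, h3, h3', h3'.symm]

lemma card_unitDirs : unitDirs.card = 6 := by
  rw [card_eq_sum_ones, sum_unitDirs]

lemma dE_add (x v : Pt) : dE x (x + v) = Real.sqrt (v.1 ^ 2 + v.2 ^ 2) := by
  simp only [dE, Prod.fst_add, Prod.snd_add]
  ring_nf

lemma normSq_lattice (A B : ℤ) :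
    ((A : ℝ) • t1 + (B : ℝ) • t2).1 ^ 2 + ((A : ℝ) • t1 + (B : ℝ) • t2).2 ^ 2
      = ((A ^ 2 + A * B + B ^ 2 : ℤ) : ℝ) := by
  have h3 : Real.sqrt 3 ^ 2 = 3 := Real.sq_sqrt (by norm_num)
  simp only [t1, t2, Prod.fst_add, Prod.snd_add, Prod.smul_fst, Prod.smul_snd, smul_eq_mul]
  push_cast
  linear_combination (B : ℝ) ^ 2 / 4 * h3

lemma exists_sub_eq_of_mem_LF {p q : ℕ} {x y : Pt} (hx : x ∈ LF p q) (hy : y ∈ LF p q) :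
    ∃ A B : ℤ, y - x = (A : ℝ) • t1 + (B : ℝ) • t2 := by
  obtain ⟨a, b, rfl⟩ := hx
  obtain ⟨a', b', rfl⟩ := hy
  exact ⟨a' - a, (b' : ℤ) - b, by push_cast; module⟩

lemma quadForm_pos {A B : ℤ} (h : A ≠ 0 ∨ B ≠ 0) : 0 < A ^ 2 + A * B + B ^ 2 := by
  rcases h with hA | hB
  · nlinarith [sq_nonneg (A + 2 * B), sq_pos_of_ne_zero hA]
  · nlinarith [sq_nonneg (2 * A + B), sq_pos_of_ne_zero hB]

lemma lattice_mem_unitDirs {A B : ℤ} (h : A ^ 2 + A * B + B ^ 2 = 1) :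
    (A : ℝ) • t1 + (B : ℝ) • t2 ∈ unitDirs := by
  have hB1 : -1 ≤ B := by nlinarith [sq_nonneg (2 * A + B)]
  have hB2 : B ≤ 1 := by nlinarith [sq_nonneg (2 * A + B)]
  have hA1 : -1 ≤ A := by nlinarith [sq_nonneg (A + 2 * B)]
  have hA2 : A ≤ 1 := by nlinarith [sq_nonneg (A + 2 * B)]
  simp only [unitDirs, mem_insert, mem_singleton]
  interval_cases A <;> interval_cases B <;> revert h <;> norm_num [t1, t2, Prod.ext_iff]

lemma normSq_of_mem_unitDirs {v : Pt} (hv : v ∈ unitDirs) : v.1 ^ 2 + v.2 ^ 2 = 1 := by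
  have h3 : Real.sqrt 3 ^ 2 = 3 := Real.sq_sqrt (by norm_num)
  simp only [unitDirs, mem_insert, mem_singleton] at hv
  rcases hv with rfl | rfl | rfl | rfl | rfl | rfl <;> norm_num [t1, t2, div_pow, h3]

lemma one_le_dE {p q : ℕ} {x y : Pt} (hx : x ∈ LF p q) (hy : y ∈ LF p q) (hxy : x ≠ y) :
    1 ≤ dE x y := by
  obtain ⟨A, B, hAB⟩ := exists_sub_eq_of_mem_LF hx hy
  have hne : A ≠ 0 ∨ B ≠ 0 := by
    by_contra! h
    rw [h.1, h.2] at hAB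
    exact hxy (by simpa [sub_eq_zero, eq_comm] using hAB)
  rw [← add_sub_cancel x y, hAB, dE_add, normSq_lattice, Real.one_le_sqrt]
  exact_mod_cast quadForm_pos hne

lemma dE_eq_one_iff {p q : ℕ} {x y : Pt} (hx : x ∈ LF p q) (hy : y ∈ LF p q) :
    dE x y = 1 ↔ y - x ∈ unitDirs := by
  rw [← add_sub_cancel x y, dE_add, add_sub_cancel_left]
  constructor
  · obtain ⟨A, B, hAB⟩ := exists_sub_eq_of_mem_LF hx hy
    rw [hAB, normSq_lattice, Real.sqrt_eq_one]
    exact fun h => lattice_mem_unitDirs (by exact_mod_cast h)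
  · intro hv
    rw [normSq_of_mem_unitDirs hv, Real.sqrt_one]

lemma eS_le_snd_of_mem_LF {p q : ℕ} {x : Pt} (hx : x ∈ LF p q) : eS p q ≤ x.2 := by
  obtain ⟨a, b, rfl⟩ := hx
  simp [t1, t2]

lemma snd_eq_eS_of_mem_bLFS {p q : ℕ} {x : Pt} (hx : x ∈ bLFS p q) : x.2 = eS p q := by
  obtain ⟨k, rfl⟩ := hx
  rfl

lemma add_t1_notMem_bLFS {p q : ℕ} (hq : q ≠ 1) {x : Pt} (hx : x ∈ bLFS p q) :
    x + t1 ∉ bLFS p q := by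
  obtain ⟨k, rfl⟩ := hx
  rintro ⟨k', hk'⟩
  have h : ((k * q + 1 : ℤ) : ℝ) = ((k' * q : ℤ) : ℝ) := by
    push_cast
    simpa [t1] using congrArg Prod.fst hk'
  have hdvd : (q : ℤ) ∣ 1 := ⟨k' - k, by linarith [(Int.cast_inj.mp h : k * q + 1 = k' * q)]⟩
  exact hq (by exact_mod_cast Int.eq_one_of_dvd_one (by positivity) hdvd)

def degree (D : Finset Pt) (x : Pt) : ℕ := (D.filter fun y => dE x y = 1).card

lemma degree_eq_card_filter_unitDirs {p q : ℕ} {D : Finset Pt} (hD : ↑D ⊆ LF p q) {x : Pt}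
    (hx : x ∈ LF p q) : degree D x = (unitDirs.filter fun v => x + v ∈ D).card := by
  rw [degree, ← card_map (addLeftEmbedding x) (s := unitDirs.filter fun v => x + v ∈ D)]
  congr 1
  ext y
  simp only [mem_filter, Finset.mem_map, addLeftEmbedding_apply]
  constructor
  · rintro ⟨hy, h1⟩
    exact ⟨y - x, ⟨(dE_eq_one_iff hx (hD hy)).mp h1, by simpa using hy⟩, by simp⟩
  · rintro ⟨v, ⟨hv, hxv⟩, rfl⟩
    exact ⟨hxv, (dE_eq_one_iff hx (hD hxv)).mpr (by simpa using hv)⟩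

lemma degree_le_six {p q : ℕ} {D : Finset Pt} (hD : ↑D ⊆ LF p q) {x : Pt} (hx : x ∈ LF p q) :
    degree D x ≤ 6 := by
  rw [degree_eq_card_filter_unitDirs hD hx, ← card_unitDirs]
  exact card_filter_le _ _

def missingBonds (D : Finset Pt) (v : Pt) : ℕ := (D.filter fun x => x + v ∉ D).card

lemma missingBonds_neg (D : Finset Pt) (v : Pt) : missingBonds D (-v) = missingBonds D v := by
  have hbonds : (D.filter fun x => x + -v ∈ D).card = (D.filter fun x => x + v ∈ D).card := by
    rw [← card_map (addRightEmbedding (-v))]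
    congr 1
    ext y
    simp only [mem_filter, Finset.mem_map, addRightEmbedding_apply]
    constructor
    · rintro ⟨x, ⟨hx, hxv⟩, rfl⟩
      exact ⟨hxv, by simpa using hx⟩
    · rintro ⟨hy, hyv⟩
      exact ⟨y + v, ⟨hyv, by simpa using hy⟩, by simp⟩
  have h₁ := card_filter_add_card_filter_not (s := D) (fun x => x + -v ∈ D)
  have h₂ := card_filter_add_card_filter_not (s := D) (fun x => x + v ∈ D)
  rw [missingBonds, missingBonds]
  omega

def defect (D : Finset Pt) : ℕ := ∑ x ∈ D, (6 - degree D x)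

lemma defect_eq_sum_missingBonds {p q : ℕ} {D : Finset Pt} (hD : ↑D ⊆ LF p q) :
    defect D = ∑ v ∈ unitDirs, missingBonds D v := by
  have hfree : ∀ x ∈ D, 6 - degree D x = (unitDirs.filter fun v => x + v ∉ D).card := by
    intro x hx
    have := card_filter_add_card_filter_not (s := unitDirs) (fun v => x + v ∈ D)
    rw [degree_eq_card_filter_unitDirs hD (hD hx), ← card_unitDirs]
    omega
  simp only [defect, missingBonds, sum_congr rfl hfree, card_filter]
  exact sum_comm

lemma defect_eq_two_mul {p q : ℕ} {D : Finset Pt} (hD : ↑D ⊆ LF p q) :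
    defect D = 2 * (missingBonds D t1 + missingBonds D (-t2) + missingBonds D (t1 - t2)) := by
  have h₁ := missingBonds_neg D t1
  have h₂ := missingBonds_neg D t2
  have h₃ := missingBonds_neg D (t1 - t2)
  rw [neg_sub] at h₃
  rw [defect_eq_sum_missingBonds hD, sum_unitDirs]
  omega

def bottomRow (p q : ℕ) (D : Finset Pt) : Finset Pt := D.filter fun x => x.2 = eS p q

def substrateSites (p q : ℕ) (D : Finset Pt) : Finset Pt := D.filter (· ∈ bLFS p q)

lemma card_bottomRow_le_missingBonds {p q : ℕ} {D : Finset Pt} (hD : ↑D ⊆ LF p q) {v : Pt}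
    (hv : v.2 < 0) :
    (bottomRow p q D).card ≤ missingBonds D v := by
  refine card_le_card fun x hx => ?_
  rw [bottomRow, mem_filter] at hx
  refine mem_filter.mpr ⟨hx.1, fun hxv => ?_⟩
  have := eS_le_snd_of_mem_LF (hD hxv)
  simp only [Prod.snd_add, hx.2] at this
  linarith

lemma four_mul_card_bottomRow_le_defect {p q : ℕ} {D : Finset Pt} (hD : ↑D ⊆ LF p q) :
    4 * (bottomRow p q D).card ≤ defect D := by
  have h₁ := card_bottomRow_le_missingBonds hD (v := -t2) (by simp [t2])
  have h₂ := card_bottomRow_le_missingBonds hD (v := t1 - t2) (by simp [t1, t2])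
  rw [defect_eq_two_mul hD]
  omega

lemma card_bottomRow_eq_add {p q : ℕ} (D : Finset Pt) :
    (bottomRow p q D).card
      = (substrateSites p q D).card + ((bottomRow p q D).filter (· ∉ bLFS p q)).card := by
  have hS : (bottomRow p q D).filter (· ∈ bLFS p q) = substrateSites p q D := by
    ext x
    simp only [bottomRow, substrateSites, mem_filter, and_assoc]
    exact and_congr_right fun _ => ⟨And.right, fun h => ⟨snd_eq_eS_of_mem_bLFS h, h⟩⟩
  rw [← hS, card_filter_add_card_filter_not]

lemma card_substrateSites_le_missingBonds_add {p q : ℕ} (hq : q ≠ 1) (D : Finset Pt) :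
    (substrateSites p q D).card
      ≤ missingBonds D t1 + ((bottomRow p q D).filter (· ∉ bLFS p q)).card := by
  set S := substrateSites p q D
  have hfree : (S.filter fun x => x + t1 ∉ D).card ≤ missingBonds D t1 :=
    card_le_card (filter_subset_filter _ (filter_subset _ _))
  have hbonded : (S.filter fun x => x + t1 ∈ D).card
      ≤ ((bottomRow p q D).filter (· ∉ bLFS p q)).card := by
    refine card_le_card_of_injOn (· + t1) (fun x hx => ?_) (fun _ _ _ _ => add_right_cancel)
    simp only [S, substrateSites, coe_filter, mem_filter, Set.mem_ofPred_eq] at hx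
    obtain ⟨⟨-, hxb⟩, hxD⟩ := hx
    simp only [bottomRow, coe_filter, mem_filter, Set.mem_ofPred_eq, Prod.snd_add]
    exact ⟨⟨hxD, by simp [t1, snd_eq_eS_of_mem_bLFS hxb]⟩, add_t1_notMem_bLFS hq hxb⟩
  have := card_filter_add_card_filter_not (s := S) (fun x => x + t1 ∈ D)
  omega

def substrateFactor (q : ℕ) : ℕ := if q = 1 then 4 else 6

theorem substrateFactor_mul_card_le_defect {p q : ℕ} {D : Finset Pt} (hD : ↑D ⊆ LF p q) :
    substrateFactor q * (substrateSites p q D).card ≤ defect D := by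
  have hsplit := card_bottomRow_eq_add (p := p) (q := q) D
  unfold substrateFactor
  split_ifs with hq
  · have := four_mul_card_bottomRow_le_defect hD
    omega
  · have h₁ := card_substrateSites_le_missingBonds_add (p := p) hq D
    have h₂ := card_bottomRow_le_missingBonds hD (v := -t2) (by simp [t2])
    have h₃ := card_bottomRow_le_missingBonds hD (v := t1 - t2) (by simp [t1, t2])
    rw [defect_eq_two_mul hD]
    omega

lemma card_bdry_le_defect (D : Finset Pt) : (bdry D).card ≤ defect D := by
  calc (bdry D).card = ∑ _x ∈ bdry D, 1 := card_eq_sum_ones _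
    _ ≤ ∑ x ∈ bdry D, (6 - degree D x) :=
        sum_le_sum fun x hx => by rw [bdry, mem_filter] at hx; unfold degree; omega
    _ ≤ defect D := sum_le_sum_of_subset (filter_subset _ _)

lemma defect_le_six_mul_card_bdry (D : Finset Pt) : defect D ≤ 6 * (bdry D).card := by
  calc defect D = ∑ x ∈ bdry D, (6 - degree D x) := by
        rw [bdry, sum_filter]
        exact sum_congr rfl fun x _ => by unfold degree; split_ifs <;> omega
    _ ≤ ∑ _x ∈ bdry D, 6 := sum_le_sum fun _ _ => Nat.sub_le _ _
    _ = 6 * (bdry D).card := by rw [sum_const, smul_eq_mul, mul_comm]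

lemma _root_.EReal.coe_finset_sum_s10 {ι : Type*} (s : Finset ι) (f : ι → ℝ) :
    ((∑ i ∈ s, f i : ℝ) : EReal) = ∑ i ∈ s, (f i : EReal) :=
  map_sum (⟨⟨Real.toEReal, EReal.coe_zero⟩, EReal.coe_add⟩ : ℝ →+ EReal) f s

lemma sum_offDiag_ite_dE_eq_one (D : Finset Pt) (c : ℝ) :
    ∑ e ∈ D.offDiag, (if dE e.1 e.2 = 1 then c else 0) = c * ∑ x ∈ D, (degree D x : ℝ) := by
  have hsub : D.offDiag ⊆ D ×ˢ D := fun e he => by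
    rw [mem_offDiag] at he
    exact mem_product.mpr ⟨he.1, he.2.1⟩
  have hdiag : ∀ e ∈ D ×ˢ D, e ∉ D.offDiag → (if dE e.1 e.2 = 1 then c else 0) = 0 := by
    intro e he hne
    have : e.1 = e.2 := by
      by_contra h
      exact hne (mem_offDiag.mpr ⟨(mem_product.mp he).1, (mem_product.mp he).2, h⟩)
    simp [this, dE]
  rw [sum_subset hsub hdiag, sum_product, mul_sum]
  refine sum_congr rfl fun x _ => ?_
  rw [← sum_filter, sum_const, degree, nsmul_eq_mul, mul_comm]

lemma Vn_eq {cF cS : ℝ} {p q : ℕ} {D : Finset Pt} (hD : ↑D ⊆ LF p q) :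
    Vn cF cS p q D
      = ((-cF * ∑ x ∈ D, (degree D x : ℝ) - cS * (substrateSites p q D).card : ℝ) : EReal) := by
  have hpair : ∀ e ∈ D.offDiag,
      vF cF (dE e.1 e.2) = ((if dE e.1 e.2 = 1 then -cF else 0 : ℝ) : EReal) := by
    intro e he
    rw [mem_offDiag] at he
    rw [vF, if_neg (one_le_dE (hD he.1) (hD he.2.1) he.2.2).not_gt]
    split_ifs <;> simp
  have hsubstrate : ∑ x ∈ D, v1 cS p q x = -cS * (substrateSites p q D).card := by
    simp only [v1]
    rw [← sum_filter, sum_const, nsmul_eq_mul, substrateSites, mul_comm]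
  rw [Vn, sum_congr rfl hpair, ← EReal.coe_finset_sum_s10, sum_offDiag_ite_dE_eq_one, hsubstrate,
    ← EReal.coe_add]
  ring_nf

def excessEnergy (cF cS : ℝ) (p q : ℕ) (D : Finset Pt) : ℝ :=
  cF * defect D - cS * (substrateSites p q D).card

lemma En_eq {cF cS : ℝ} {p q n : ℕ} {D : Finset Pt} (hD : D ∈ Cn p q n) :
    En cF cS p q n D = (((Real.sqrt n)⁻¹ * excessEnergy cF cS p q D : ℝ) : EReal) := by
  obtain ⟨hLF, hcard⟩ := hD
  have hdefect : (defect D : ℝ) = 6 * n - ∑ x ∈ D, (degree D x : ℝ) := by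
    rw [defect, Nat.cast_sum, sum_congr rfl fun x hx => Nat.cast_sub (degree_le_six hLF (hLF hx)),
      sum_sub_distrib, sum_const, hcard, nsmul_eq_mul]
    push_cast
    ring
  rw [En, Vn_eq hLF, ← EReal.coe_add, ← EReal.coe_mul, excessEnergy, hdefect]
  ring_nf

lemma DeltaStrip_eq (cF cS : ℝ) (q : ℕ) :
    DeltaStrip cF cS q = substrateFactor q * cF - cS := by
  unfold DeltaStrip substrateFactor
  split_ifs <;> norm_num

lemma DeltaStrip_pos {cF cS : ℝ} {q : ℕ} (h : Dewetting cF cS q) : 0 < DeltaStrip cF cS q := by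
  unfold Dewetting at h
  unfold DeltaStrip
  split_ifs at h ⊢ <;> linarith

lemma DeltaStrip_mul_defect_le_excessEnergy {cF cS : ℝ} (hcS : 0 ≤ cS) {p q : ℕ}
    {D : Finset Pt} (hD : ↑D ⊆ LF p q) :
    DeltaStrip cF cS q * defect D ≤ substrateFactor q * excessEnergy cF cS p q D := by
  have h : (substrateFactor q * (substrateSites p q D).card : ℝ) ≤ defect D := by
    exact_mod_cast substrateFactor_mul_card_le_defect hD
  rw [DeltaStrip_eq, excessEnergy]
  nlinarith [mul_le_mul_of_nonneg_left h hcS]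

lemma excessEnergy_le_six_mul_card_bdry {cF cS : ℝ} (hcF : 0 ≤ cF) (hcS : 0 ≤ cS) (p q : ℕ)
    (D : Finset Pt) : excessEnergy cF cS p q D ≤ 6 * cF * (bdry D).card := by
  have h : (defect D : ℝ) ≤ 6 * (bdry D).card := by exact_mod_cast defect_le_six_mul_card_bdry D
  have hS : 0 ≤ cS * (substrateSites p q D).card := by positivity
  rw [excessEnergy]
  nlinarith [mul_le_mul_of_nonneg_left h hcF]

end FilmLattice

open FilmLattice in
theorem bdry_bound_iff_energy_bound_general
    (cF cS : ℝ) (hcF : 0 < cF) (hcS : 0 < cS)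
    (p q : ℕ)
    (hdew : Dewetting cF cS q)
    (D : ℕ → Finset Pt) (hD : ∀ n, D n ∈ Cn p q n) :
    (∃ C : ℝ, 0 < C ∧ ∀ n : ℕ, ((bdry (D n)).card : ℝ) ≤ C * Real.sqrt n) ↔
      (∃ C' : ℝ, 0 < C' ∧ ∀ n : ℕ, En cF cS p q n (D n) ≤ ((C' : ℝ) : EReal)) := by
  simp_rw [En_eq (hD _), EReal.coe_le_coe_iff]
  constructor
  · rintro ⟨C, hC, hbdry⟩
    refine ⟨6 * cF * C, by positivity, fun n => ?_⟩
    refine inv_mul_le_of_le_mul₀ (Real.sqrt_nonneg _) (by positivity) ?_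
    calc _ ≤ 6 * cF * (bdry (D n)).card := excessEnergy_le_six_mul_card_bdry hcF.le hcS.le p q _
      _ ≤ 6 * cF * (C * Real.sqrt n) := by gcongr; exact hbdry n
      _ = Real.sqrt n * (6 * cF * C) := by ring
  · rintro ⟨C', hC', henergy⟩
    have hΔ := DeltaStrip_pos hdew
    have hfactor : (0 : ℝ) < substrateFactor q := by unfold substrateFactor; split_ifs <;> norm_num
    refine ⟨substrateFactor q * C' / DeltaStrip cF cS q, by positivity, fun n => ?_⟩
    rcases n.eq_zero_or_pos with rfl | hn
    · simp [Finset.card_eq_zero.mp (hD 0).2, bdry]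
    have hE := (inv_mul_le_iff₀ (by positivity)).mp (henergy n)
    rw [div_mul_eq_mul_div, le_div_iff₀ hΔ]
    calc ((bdry (D n)).card : ℝ) * DeltaStrip cF cS q
        ≤ DeltaStrip cF cS q * defect (D n) := by
          rw [mul_comm]; gcongr; exact_mod_cast card_bdry_le_defect (D n)
      _ ≤ substrateFactor q * excessEnergy cF cS p q (D n) :=
          DeltaStrip_mul_defect_le_excessEnergy hcS.le (hD n).1
      _ ≤ substrateFactor q * (Real.sqrt n * C') := by gcongr
      _ = _ := by ring

/-- in the dewetting regime, `#∂D_n ≤ C √n` for all `n` iff the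
rescaled energies `E_n(μ_{D_n})` are equibounded. -/
theorem bdry_bound_iff_energy_bound
    (cF cS : ℝ) (hcF : 0 < cF) (hcS : 0 < cS)
    (p q : ℕ) (hp : 0 < p) (hq : 0 < q) (hpq : Nat.Coprime p q)
    (hdew : Dewetting cF cS q)
    (D : ℕ → Finset Pt) (hD : ∀ n, D n ∈ Cn p q n) :
    (∃ C : ℝ, 0 < C ∧ ∀ n : ℕ, ((bdry (D n)).card : ℝ) ≤ C * Real.sqrt n) ↔
      (∃ C' : ℝ, 0 < C' ∧ ∀ n : ℕ, En cF cS p q n (D n) ≤ ((C' : ℝ) : EReal)) :=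
  bdry_bound_iff_energy_bound_general cF cS hcF hcS p q hdew D hD
end
end

section
/- Let Ω ⊂ ℝ^d be an open set, and let (κ_n) and (μ_n) be sequences of finite nonnegative Borel measures on Ω such that: (i) sup_{n ∈ ℕ} (μ_n(Ω) + κ_n(Ω)) < ∞; (ii) (κ_n) is uniformly absolutely continuous with respect to (μ_n), i.e. for every ε > 0 there exists δ > 0 such that for every Borel set A ⊂ Ω and every n ∈ ℕ, μ_n(A) < δ implies κ_n(A) < ε. If there exist Borel measures κ and μ on Ω with κ_n → κ and μ_n → μ in the weak* sense (integrals against every continuous compactly supported function on Ω converge), then κ is absolutely continuous with respect to μ. -/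
open scoped Topology ENNReal
open Filter MeasureTheory

/-! Fix `ε` and the `δ` that uniform absolute continuity gives for it. If `μ A = 0`, outer
regularity gives an open `U ⊇ A` with `μ U < δ`. For a compact `K ⊆ U`, choose a compact `L`
with `K ⊆ interior L` and `L ⊆ U`. Testing the vague convergence against Urysohn functions,
`μₙ L < δ` for large `n`, so `κₙ L < ε`, and in the limit `κ K ≤ ε`. Inner regularity of `κ`
gives `κ A ≤ κ U ≤ ε`. -/

variable {X ι : Type*}

def VaguelyTendsto [TopologicalSpace X] [MeasurableSpace X] (νs : ι → Measure X) (l : Filter ι)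
    (ν : Measure X) : Prop :=
  ∀ ψ : X → ℝ, Continuous ψ → HasCompactSupport ψ →
    Tendsto (fun i => ∫ x, ψ x ∂(νs i)) l (𝓝 (∫ x, ψ x ∂ν))

def UniformlyAbsolutelyContinuous [MeasurableSpace X] (κs μs : ι → Measure X) : Prop :=
  ∀ ε : ℝ, 0 < ε → ∃ δ : ℝ, 0 < δ ∧ ∀ A : Set X, MeasurableSet A →
    ∀ i, μs i A < ENNReal.ofReal δ → κs i A < ENNReal.ofReal ε

lemma exists_continuous_indicator_le_le_indicator [TopologicalSpace X] [RegularSpace X]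
    [LocallyCompactSpace X] {K U : Set X} (hK : IsCompact K) (hU : IsOpen U) (hKU : K ⊆ U) :
    ∃ φ : X → ℝ, Continuous φ ∧ HasCompactSupport φ ∧ K.indicator 1 ≤ φ ∧ φ ≤ U.indicator 1 := by
  obtain ⟨φ, hφK, hφU, hφc, hφ01⟩ :=
    exists_continuous_one_zero_of_isCompact hK hU.isClosed_compl
      (Set.disjoint_compl_right_iff_subset.mpr hKU)
  refine ⟨φ, φ.continuous, hφc, fun x => ?_, fun x => ?_⟩
  · by_cases hx : x ∈ K
    · simp [hx, hφK hx]
    · simp [hx, (hφ01 x).1]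
  · by_cases hx : x ∈ U
    · simp [hx, (hφ01 x).2]
    · simp [hx, hφU hx]

section Integral

variable [MeasurableSpace X] {ν : Measure X} [IsFiniteMeasure ν] {s : Set X} {f : X → ℝ}

lemma measureReal_le_integral_of_indicator_le (hs : MeasurableSet s) (hf : Integrable f ν)
    (h : s.indicator 1 ≤ f) : ν.real s ≤ ∫ x, f x ∂ν :=
  integral_indicator_one hs ▸ integral_mono ((integrable_const 1).indicator hs) hf h

lemma integral_le_measureReal_of_le_indicator (hs : MeasurableSet s) (hf : Integrable f ν)
    (h : f ≤ s.indicator 1) : ∫ x, f x ∂ν ≤ ν.real s :=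
  integral_indicator_one hs ▸ integral_mono hf ((integrable_const 1).indicator hs) h

end Integral

section Vague

variable [TopologicalSpace X] [MeasurableSpace X] [T2Space X] [LocallyCompactSpace X]
  [OpensMeasurableSpace X] {νs : ι → Measure X} {l : Filter ι} {ν : Measure X}
  [∀ i, IsFiniteMeasure (νs i)] [IsFiniteMeasure ν] {K U : Set X}

lemma VaguelyTendsto.eventually_measureReal_lt (h : VaguelyTendsto νs l ν) (hK : IsCompact K)
    (hU : IsOpen U) (hKU : K ⊆ U) {c : ℝ} (hUc : ν.real U < c) :
    ∀ᶠ i in l, (νs i).real K < c := by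
  obtain ⟨φ, hφ, hφc, hKφ, hφU⟩ := exists_continuous_indicator_le_le_indicator hK hU hKU
  have hlim : ∫ x, φ x ∂ν < c :=
    (integral_le_measureReal_of_le_indicator hU.measurableSet
      (hφ.integrable_of_hasCompactSupport hφc) hφU).trans_lt hUc
  filter_upwards [(h φ hφ hφc).eventually (eventually_lt_nhds hlim)] with i hi
  exact (measureReal_le_integral_of_indicator_le hK.measurableSet
    (hφ.integrable_of_hasCompactSupport hφc) hKφ).trans_lt hi

lemma VaguelyTendsto.measureReal_le [l.NeBot] (h : VaguelyTendsto νs l ν) (hK : IsCompact K)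
    (hU : IsOpen U) (hKU : K ⊆ U) {c : ℝ} (hUc : ∀ᶠ i in l, (νs i).real U ≤ c) :
    ν.real K ≤ c := by
  obtain ⟨φ, hφ, hφc, hKφ, hφU⟩ := exists_continuous_indicator_le_le_indicator hK hU hKU
  have hφc_le : ∀ᶠ i in l, ∫ x, φ x ∂(νs i) ≤ c := by
    filter_upwards [hUc] with i hi
    exact (integral_le_measureReal_of_le_indicator hU.measurableSet
      (hφ.integrable_of_hasCompactSupport hφc) hφU).trans hi
  exact (measureReal_le_integral_of_indicator_le hK.measurableSet
    (hφ.integrable_of_hasCompactSupport hφc) hKφ).trans (le_of_tendsto (h φ hφ hφc) hφc_le)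

section AbsolutelyContinuous

variable {κs μs : ι → Measure X} {κ μ : Measure X} [∀ i, IsFiniteMeasure (κs i)]
  [∀ i, IsFiniteMeasure (μs i)] [IsFiniteMeasure κ] [IsFiniteMeasure μ] [l.NeBot]

lemma measure_isOpen_le_of_vaguelyTendsto [κ.Regular] (hκ : VaguelyTendsto κs l κ)
    (hμ : VaguelyTendsto μs l μ) {δ ε : ℝ} (hε : 0 ≤ ε)
    (hδε : ∀ A, MeasurableSet A → ∀ i, μs i A < ENNReal.ofReal δ → κs i A < ENNReal.ofReal ε)
    (hU : IsOpen U) (hUδ : μ U < ENNReal.ofReal δ) : κ U ≤ ENNReal.ofReal ε := by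
  rw [hU.measure_eq_iSup_isCompact κ]
  refine iSup₂_le fun K hKU => iSup_le fun hK => ?_
  obtain ⟨L, hL, hKL, hLU⟩ := exists_compact_between hK hU hKU
  have hμL : ∀ᶠ i in l, μs i L < ENNReal.ofReal δ := by
    filter_upwards [hμ.eventually_measureReal_lt hL hU hLU
      ((ENNReal.lt_ofReal_iff_toReal_lt (measure_ne_top μ U)).1 hUδ)] with i hi
    exact (ENNReal.lt_ofReal_iff_toReal_lt (measure_ne_top _ _)).2 hi
  have hκL : ∀ᶠ i in l, (κs i).real (interior L) ≤ ε := by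
    filter_upwards [hμL] with i hi
    exact (ENNReal.le_ofReal_iff_toReal_le (measure_ne_top _ _) hε).1
      ((measure_mono interior_subset).trans (hδε L hL.measurableSet i hi).le)
  exact (ENNReal.le_ofReal_iff_toReal_le (measure_ne_top _ _) hε).2
    (hκ.measureReal_le hK isOpen_interior hKL hκL)

theorem UniformlyAbsolutelyContinuous.absolutelyContinuous_of_vaguelyTendsto [κ.Regular]
    [μ.OuterRegular] (huac : UniformlyAbsolutelyContinuous κs μs)
    (hκ : VaguelyTendsto κs l κ) (hμ : VaguelyTendsto μs l μ) : κ ≪ μ := by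
  refine fun A hA => le_antisymm (ENNReal.le_of_forall_pos_le_add fun ε hε _ => ?_) zero_le
  obtain ⟨δ, hδ, hδε⟩ := huac ε hε
  obtain ⟨U, hAU, hU, hUδ⟩ := Set.exists_isOpen_lt_of_lt A _ (hA ▸ ENNReal.ofReal_pos.2 hδ)
  calc κ A ≤ κ U := measure_mono hAU
    _ ≤ ENNReal.ofReal ε := measure_isOpen_le_of_vaguelyTendsto hκ hμ ε.2 hδε hU hUδ
    _ = 0 + ε := by simp

end AbsolutelyContinuous

end Vague

theorem limit_absolutelyContinuous_general
    {d : ℕ} {Ω : Set (Fin d → ℝ)} (hΩ : IsOpen Ω)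
    (κn μn : ℕ → Measure ↥Ω) (κ μ : Measure ↥Ω)
    (hκfin : ∀ n, IsFiniteMeasure (κn n)) (hμfin : ∀ n, IsFiniteMeasure (μn n))
    [IsFiniteMeasure κ] [IsFiniteMeasure μ]
    (huac : ∀ ε : ℝ, 0 < ε → ∃ δ : ℝ, 0 < δ ∧ ∀ A : Set ↥Ω, MeasurableSet A →
      ∀ n, μn n A < ENNReal.ofReal δ → κn n A < ENNReal.ofReal ε)
    (hκconv : ∀ ψ : ↥Ω → ℝ, Continuous ψ → HasCompactSupport ψ →
      Tendsto (fun n => ∫ x, ψ x ∂(κn n)) atTop (𝓝 (∫ x, ψ x ∂κ)))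
    (hμconv : ∀ ψ : ↥Ω → ℝ, Continuous ψ → HasCompactSupport ψ →
      Tendsto (fun n => ∫ x, ψ x ∂(μn n)) atTop (𝓝 (∫ x, ψ x ∂μ))) :
    κ ≪ μ := by
  have : LocallyCompactSpace Ω := hΩ.locallyCompactSpace
  have : SigmaCompactSpace Ω := sigmaCompactSpace_of_locallyCompact_secondCountable
  exact UniformlyAbsolutelyContinuous.absolutelyContinuous_of_vaguelyTendsto huac hκconv hμconv

/-- if finite nonnegative Borel measures `κ_n` on an open set
`Ω ⊂ ℝ^d` are uniformly absolutely continuous with respect to `μ_n`, have uniformly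
bounded total masses, and `κ_n ⇀* κ`, `μ_n ⇀* μ` (tested against continuous
compactly supported functions), then `κ ≪ μ`. -/
theorem limit_absolutelyContinuous
    {d : ℕ} {Ω : Set (Fin d → ℝ)} (hΩ : IsOpen Ω)
    (κn μn : ℕ → Measure ↥Ω) (κ μ : Measure ↥Ω)
    (hκfin : ∀ n, IsFiniteMeasure (κn n)) (hμfin : ∀ n, IsFiniteMeasure (μn n))
    [IsFiniteMeasure κ] [IsFiniteMeasure μ]
    (hbd : ∃ M : ℝ, ∀ n, μn n Set.univ + κn n Set.univ ≤ ENNReal.ofReal M)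
    (huac : ∀ ε : ℝ, 0 < ε → ∃ δ : ℝ, 0 < δ ∧ ∀ A : Set ↥Ω, MeasurableSet A →
      ∀ n, μn n A < ENNReal.ofReal δ → κn n A < ENNReal.ofReal ε)
    (hκconv : ∀ ψ : ↥Ω → ℝ, Continuous ψ → HasCompactSupport ψ →
      Tendsto (fun n => ∫ x, ψ x ∂(κn n)) atTop (𝓝 (∫ x, ψ x ∂κ)))
    (hμconv : ∀ ψ : ↥Ω → ℝ, Continuous ψ → HasCompactSupport ψ →
      Tendsto (fun n => ∫ x, ψ x ∂(μn n)) atTop (𝓝 (∫ x, ψ x ∂μ))) :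
    κ ≪ μ :=
  limit_absolutelyContinuous_general hΩ κn μn κ μ hκfin hμfin huac hκconv hμconv
end
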